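/- Let p₀ = 4X⁶ − 12X⁵ + 10X⁴ + 2X² − 4X + 4 and a = X(X−1)(X+1)(X−2), both in Polynomial ℂ. Then the ℂ-linear subspace of the space of polynomials of degree < 7 consisting of those p with a ∣ (p₀·p' − p₀'·p) has dimension (finrank over ℂ) equal to 4 (and not 3 = k+1−r for k = 6, r = 4). -/

import Mathlib

open Polynomial

/-- The linear map `p ↦ p₀ * p' - p₀' * p`. -/
noncomputable def wronskianMap (p₀ : Polynomial ℂ) : Polynomial ℂ →ₗ[ℂ] Polynomial ℂ where
  toFun p := p₀ * derivative p - derivative p₀ * p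
  map_add' p q := by rw [derivative_add]; ring
  map_smul' c p := by
    simp only [derivative_smul, RingHom.id_apply, smul_sub, mul_smul_comm, smul_mul_assoc]

/-- The subspace of polynomials `p` of degree `< n` with `a ∣ p₀ * p' - p₀' * p`. -/
noncomputable def wronskianKer (a p₀ : Polynomial ℂ) (n : ℕ) : Submodule ℂ (Polynomial ℂ) :=
  Polynomial.degreeLT ℂ n ⊓
    Submodule.comap (wronskianMap p₀) ((Ideal.span {a}).restrictScalars ℂ)

lemma wronskianMap_apply' (p₀ p : Polynomial ℂ) :
    wronskianMap p₀ p = p₀ * derivative p - derivative p₀ * p := rfl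

/-- An explicit basis for the kernel in Remark 3.4. -/
noncomputable def wronskianKerBasisFun : Fin 4 → Polynomial ℂ :=
  ![2*X^3 - 3*X^2 - X + 1,
    3*X^4 - 7*X^2 - 2*X + 2,
    3*X^5 - 10*X^2 - 2*X + 2,
    3*X^6 - 11*X^2 - 4*X + 4]

lemma wronskianKerBasisFun_linearIndependent : LinearIndependent ℂ wronskianKerBasisFun := by
  rw [Fintype.linearIndependent_iff]
  intro g hg
  rw [Fin.sum_univ_four] at hg
  have h6 := congrArg (fun q => Polynomial.coeff q 6) hg
  have h5 := congrArg (fun q => Polynomial.coeff q 5) hg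
  have h4 := congrArg (fun q => Polynomial.coeff q 4) hg
  have h3 := congrArg (fun q => Polynomial.coeff q 3) hg
  simp only [wronskianKerBasisFun, Matrix.cons_val_zero, Matrix.cons_val_one, Matrix.head_cons,
    Matrix.cons_val_two, Matrix.tail_cons, Matrix.cons_val_three] at h6 h5 h4 h3
  simp [coeff_X, coeff_one] at h6 h5 h4 h3
  intro i
  fin_cases i <;> simp_all

lemma wronskianKer_eq_span :
    wronskianKer ((X : Polynomial ℂ) * (X - 1) * (X + 1) * (X - 2))
        (4 * X ^ 6 - 12 * X ^ 5 + 10 * X ^ 4 + 2 * X ^ 2 - 4 * X + 4) 7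
      = Submodule.span ℂ (Set.range wronskianKerBasisFun) := by
  apply le_antisymm
  · -- ⊆ : every element of the kernel is a combination of the basis polynomials
    intro p hp
    rw [wronskianKer, Submodule.mem_inf] at hp
    obtain ⟨hp1, hp2⟩ := hp
    rw [mem_degreeLT] at hp1
    rw [Submodule.mem_comap, Submodule.restrictScalars_mem, Ideal.mem_span_singleton,
      wronskianMap_apply'] at hp2
    by_cases hne : p = 0
    · simp [hne]
    have hnd : p.natDegree < 7 := (natDegree_lt_iff_degree_lt hne).mpr hp1
    have hexp : p = C (p.coeff 0) + C (p.coeff 1) * X + C (p.coeff 2) * X^2 + C (p.coeff 3) * X^3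
        + C (p.coeff 4) * X^4 + C (p.coeff 5) * X^5 + C (p.coeff 6) * X^6 := by
      conv_lhs => rw [p.as_sum_range' 7 hnd]
      simp [Finset.sum_range_succ, ← C_mul_X_pow_eq_monomial]
    have h0 := eval_eq_zero_of_dvd_of_eval_eq_zero hp2 (x := 0) (by simp)
    have h1 := eval_eq_zero_of_dvd_of_eval_eq_zero hp2 (x := 1) (by simp)
    have h2 := eval_eq_zero_of_dvd_of_eval_eq_zero hp2 (x := -1) (by simp)
    have h3 := eval_eq_zero_of_dvd_of_eval_eq_zero hp2 (x := 2) (by simp)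
    rw [hexp] at h0 h1 h2 h3
    simp only [derivative_add, derivative_sub, derivative_mul, derivative_C, derivative_X,
      derivative_X_pow, derivative_ofNat, eval_add, eval_sub, eval_mul, eval_pow, eval_C, eval_X,
      eval_ofNat, eval_one, eval_zero] at h0 h1 h2 h3
    norm_num at h0 h1 h2 h3
    obtain ⟨d0, hd0⟩ : ∃ d, p.coeff 3 = 2 * d := ⟨p.coeff 3 / 2, by ring⟩
    obtain ⟨d1, hd1⟩ : ∃ d, p.coeff 4 = 3 * d := ⟨p.coeff 4 / 3, by ring⟩
    obtain ⟨d2, hd2⟩ : ∃ d, p.coeff 5 = 3 * d := ⟨p.coeff 5 / 3, by ring⟩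
    obtain ⟨d3, hd3⟩ : ∃ d, p.coeff 6 = 3 * d := ⟨p.coeff 6 / 3, by ring⟩
    have e0 : p.coeff 0 = d0 + 2*d1 + 2*d2 + 4*d3 := by
      linear_combination (1/12)*h0 - (5/96)*h1 + (1/288)*h2 + (1/2)*hd0 + (2/3)*hd1
        + (2/3)*hd2 + (4/3)*hd3
    have e1 : p.coeff 1 = -d0 - 2*d1 - 2*d2 - 4*d3 := by
      linear_combination (1/6)*h0 + (5/96)*h1 - (1/288)*h2 - (1/2)*hd0 - (2/3)*hd1
        - (2/3)*hd2 - (4/3)*hd3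
    have e2 : p.coeff 2 = -3*d0 - 7*d1 - 10*d2 - 11*d3 := by
      linear_combination (1/12)*h0 + (19/96)*h1 + (1/288)*h2 - (3/2)*hd0 - (7/3)*hd1
        - (10/3)*hd2 - (11/3)*hd3
    have key : p = d0 • wronskianKerBasisFun 0 + d1 • wronskianKerBasisFun 1
        + d2 • wronskianKerBasisFun 2 + d3 • wronskianKerBasisFun 3 := by
      rw [hexp, e0, e1, e2, hd0, hd1, hd2, hd3]
      simp only [wronskianKerBasisFun, Matrix.cons_val_zero, Matrix.cons_val_one,
        Matrix.head_cons, Matrix.cons_val_two, Matrix.tail_cons, Matrix.cons_val_three,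
        smul_eq_C_mul, map_add, map_sub, map_mul, map_neg, map_ofNat]
      ring
    rw [key]
    refine Submodule.add_mem _ (Submodule.add_mem _ (Submodule.add_mem _ ?_ ?_) ?_) ?_ <;>
      exact Submodule.smul_mem _ _ (Submodule.subset_span ⟨_, rfl⟩)
  · -- ⊇ : each basis polynomial lies in the kernel
    rw [Submodule.span_le]
    rintro _ ⟨i, rfl⟩
    have aux : ∀ b q : Polynomial ℂ, degree b ≤ 6 →
        (4 * X ^ 6 - 12 * X ^ 5 + 10 * X ^ 4 + 2 * X ^ 2 - 4 * X + 4) * derivative b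
          - derivative (4 * X ^ 6 - 12 * X ^ 5 + 10 * X ^ 4 + 2 * X ^ 2 - 4 * X
              + 4 : Polynomial ℂ) * b
          = ((X : Polynomial ℂ) * (X - 1) * (X + 1) * (X - 2)) * q →
        b ∈ wronskianKer ((X : Polynomial ℂ) * (X - 1) * (X + 1) * (X - 2))
          (4 * X ^ 6 - 12 * X ^ 5 + 10 * X ^ 4 + 2 * X ^ 2 - 4 * X + 4) 7 := by
      intro b q hb hq
      refine Submodule.mem_inf.mpr ⟨?_, ?_⟩
      · exact mem_degreeLT.mpr (lt_of_le_of_lt hb (by norm_num))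
      · refine Submodule.mem_comap.mpr ((Submodule.restrictScalars_mem _ _ _).mpr ?_)
        rw [Ideal.mem_span_singleton]
        exact ⟨q, by rw [wronskianMap_apply', hq]⟩
    fin_cases i <;>
      simp only [wronskianKerBasisFun, Matrix.cons_val_zero, Matrix.cons_val_one,
        Matrix.head_cons, Matrix.cons_val_two, Matrix.tail_cons, Matrix.cons_val_three]
    · exact aux (2*X^3 - 3*X^2 - X + 1) (-24*X^4 + 48*X^3 - 36*X^2 + 12*X - 14) (by compute_degree!)
        (by simp [map_ofNat]; ring)
    · exact aux (3*X^4 - 7*X^2 - 2*X + 2) (-24*X^5 - 12*X^4 + 64*X^3 - 48*X^2 - 32) (by compute_degree!)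
        (by simp [map_ofNat]; ring)
    · exact aux (3*X^5 - 10*X^2 - 2*X + 2) (-12*X^6 - 24*X^5 - 30*X^4 + 100*X^3 - 84*X^2 - 44) (by compute_degree!)
        (by simp [map_ofNat]; ring)
    · exact aux (3*X^6 - 11*X^2 - 4*X + 4) (-36*X^6 - 12*X^5 - 60*X^4 + 140*X^3 - 132*X^2 - 52) (by compute_degree!)
        (by simp [map_ofNat]; ring)

/-- Remark 3.4: for `p₀ = 4X⁶ - 12X⁵ + 10X⁴ + 2X² - 4X + 4` and
`a = X(X-1)(X+1)(X-2)` (so `k = 6`, `r = 4`), the space of polynomials `p` of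
degree `< 7` with `a ∣ p₀ * p' - p₀' * p` has dimension `4`, not `3 = k + 1 - r`. -/
theorem finrank_wronskianKer_counterexample :
    Module.finrank ℂ (wronskianKer
      ((X : Polynomial ℂ) * (X - 1) * (X + 1) * (X - 2))
      (4 * X ^ 6 - 12 * X ^ 5 + 10 * X ^ 4 + 2 * X ^ 2 - 4 * X + 4) 7) = 4 := by
  rw [wronskianKer_eq_span, finrank_span_eq_card wronskianKerBasisFun_linearIndependent,
    Fintype.card_fin]
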